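/- arXiv:2304.01540 — 10 statements merged into one kernel-verified Lean document; each statement's English description precedes it below -/
import Mathlib

section
/- No gonosomal algebra is associative: for any gonosomal algebra A of type (n,ν) over K, it is not the case that x(yz) = (xy)z for all x, y, z ∈ A. -/
/-!
Let `ω` be the sum of the coordinates in the natural basis. The sum condition on the structure
constants says `ω (eᵢ ẽₚ) = 1`. Since `eᵢ eᵢ = 0`, the product `eᵢ (eᵢ ẽₚ)` only sees the
`ẽ`-part of `eᵢ ẽₚ`, so `ω (eᵢ (eᵢ ẽₚ)) = ∑ᵣ γ̃ᵢₚᵣ`; symmetrically `ω ((eᵢ ẽₚ) ẽₚ) = ∑ₖ γᵢₚₖ`.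
Associativity would make both products vanish (as `eᵢ eᵢ = 0 = ẽₚ ẽₚ`), so the two partial
sums would be `0`, contradicting that they add up to `1`.
-/

open Module

namespace Gonosomal

variable {K : Type*} [Field K] {ι κ : Type*} [Fintype ι] [Fintype κ]
  {A : Type*} [AddCommGroup A] [Module K A]
  {mul : A →ₗ[K] A →ₗ[K] A} {b : Basis (ι ⊕ κ) K A}
  {γ : ι → κ → ι → K} {γt : ι → κ → κ → K}

theorem sumCoords_mul_inl_inr
    (hef : ∀ i p, mul (b (.inl i)) (b (.inr p)) =
      (∑ k, γ i p k • b (.inl k)) + (∑ r, γt i p r • b (.inr r)))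
    (hsum : ∀ i p, (∑ k, γ i p k) + (∑ r, γt i p r) = 1) (i : ι) (p : κ) :
    b.sumCoords (mul (b (.inl i)) (b (.inr p))) = 1 := by
  simpa only [hef, map_add, map_sum, map_smul, Basis.sumCoords_self_apply, smul_eq_mul,
    mul_one] using hsum i p

theorem sumCoords_mul_inl_mul
    (hee : ∀ i j, mul (b (.inl i)) (b (.inl j)) = 0)
    (hef : ∀ i p, mul (b (.inl i)) (b (.inr p)) =
      (∑ k, γ i p k • b (.inl k)) + (∑ r, γt i p r • b (.inr r)))
    (hsum : ∀ i p, (∑ k, γ i p k) + (∑ r, γt i p r) = 1) (i j : ι) (p : κ) :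
    b.sumCoords (mul (b (.inl j)) (mul (b (.inl i)) (b (.inr p)))) = ∑ r, γt i p r := by
  simp only [hef i p, map_add, map_sum, map_smul, hee, smul_zero, Finset.sum_const_zero,
    zero_add, sumCoords_mul_inl_inr hef hsum, smul_eq_mul, mul_one]

theorem sumCoords_mul_mul_inr
    (hff : ∀ p q, mul (b (.inr p)) (b (.inr q)) = 0)
    (hef : ∀ i p, mul (b (.inl i)) (b (.inr p)) =
      (∑ k, γ i p k • b (.inl k)) + (∑ r, γt i p r • b (.inr r)))
    (hsum : ∀ i p, (∑ k, γ i p k) + (∑ r, γt i p r) = 1) (i : ι) (p q : κ) :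
    b.sumCoords (mul (mul (b (.inl i)) (b (.inr p))) (b (.inr q))) = ∑ k, γ i p k := by
  simp only [hef i p, map_add, map_sum, map_smul, LinearMap.add_apply, LinearMap.sum_apply,
    LinearMap.smul_apply, hff, smul_zero, Finset.sum_const_zero, add_zero,
    sumCoords_mul_inl_inr hef hsum, smul_eq_mul, mul_one]

end Gonosomal

open Gonosomal in
theorem gonosomal_not_associative_general
    {K : Type*} [Field K]
    {n ν : ℕ} (hn : 1 ≤ n) (hν : 1 ≤ ν)
    {A : Type*} [AddCommGroup A] [Module K A]
    (mul : A →ₗ[K] A →ₗ[K] A)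
    (b : Module.Basis (Fin n ⊕ Fin ν) K A)
    (γ : Fin n → Fin ν → Fin n → K) (γt : Fin n → Fin ν → Fin ν → K)
    (hee : ∀ i j : Fin n, mul (b (Sum.inl i)) (b (Sum.inl j)) = 0)
    (hff : ∀ p q : Fin ν, mul (b (Sum.inr p)) (b (Sum.inr q)) = 0)
    (hef : ∀ (i : Fin n) (p : Fin ν),
      mul (b (Sum.inl i)) (b (Sum.inr p)) =
        (∑ k, γ i p k • b (Sum.inl k)) + (∑ r, γt i p r • b (Sum.inr r)))
    (hsum : ∀ (i : Fin n) (p : Fin ν),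
      (∑ k, γ i p k) + (∑ r, γt i p r) = 1) :
    ¬ (∀ x y z : A, mul x (mul y z) = mul (mul x y) z) := by
  intro hassoc
  let i : Fin n := ⟨0, hn⟩
  let p : Fin ν := ⟨0, hν⟩
  have hγt : ∑ r, γt i p r = 0 := by
    rw [← sumCoords_mul_inl_mul hee hef hsum i i p, hassoc, hee, map_zero,
      LinearMap.zero_apply, map_zero]
  have hγ : ∑ k, γ i p k = 0 := by
    rw [← sumCoords_mul_mul_inr hff hef hsum i p p, ← hassoc, hff, map_zero, map_zero]
  simpa [hγ, hγt] using hsum i p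

/-- No gonosomal algebra is associative. -/
theorem gonosomal_not_associative
    {K : Type*} [Field K] (hchar : ringChar K ≠ 2)
    {n ν : ℕ} (hn : 1 ≤ n) (hν : 1 ≤ ν)
    {A : Type*} [AddCommGroup A] [Module K A]
    (mul : A →ₗ[K] A →ₗ[K] A)
    (b : Module.Basis (Fin n ⊕ Fin ν) K A)
    (γ : Fin n → Fin ν → Fin n → K) (γt : Fin n → Fin ν → Fin ν → K)
    (hee : ∀ i j : Fin n, mul (b (Sum.inl i)) (b (Sum.inl j)) = 0)
    (hff : ∀ p q : Fin ν, mul (b (Sum.inr p)) (b (Sum.inr q)) = 0)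
    (hef : ∀ (i : Fin n) (p : Fin ν),
      mul (b (Sum.inl i)) (b (Sum.inr p)) =
        (∑ k, γ i p k • b (Sum.inl k)) + (∑ r, γt i p r • b (Sum.inr r)))
    (hfe : ∀ (i : Fin n) (p : Fin ν),
      mul (b (Sum.inr p)) (b (Sum.inl i)) = mul (b (Sum.inl i)) (b (Sum.inr p)))
    (hsum : ∀ (i : Fin n) (p : Fin ν),
      (∑ k, γ i p k) + (∑ r, γt i p r) = 1) :
    ¬ (∀ x y z : A, mul x (mul y z) = mul (mul x y) z) :=
  gonosomal_not_associative_general hn hν mul b γ γt hee hff hef hsum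
end

section
/- No gonosomal algebra is power associative: for any gonosomal algebra A of type (n,ν) over K, defining powers by x^1 = x and x^{m+1} = x·x^m, it is not the case that x^{i+j} = x^i · x^j for all x ∈ A and all integers i, j ≥ 1. -/
/-!
Let `E` and `F` (`weightInl`, `weightInr`) be the sums of the coordinates along the `e_i` and
along the `ẽ_p`. Every basis product `e_i ẽ_p` has total weight `E + F = 1`, so
`(E + F)(w w') = E w · F w' + E w' · F w` for all `w, w'`. Applied to `x = e_i + ẽ_p`, the
identity `x (x (x x)) = (x x)(x x)` forces `E (e_i ẽ_p) = F (e_i ẽ_p)`, hence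
`E (w w') = F (w w')` for all `w, w'`. Then the powers of `x = e_1 - ẽ_1` are computable from
their weights: `x x` has weights `(-1, -1)` and `x (x x)` weights `(0, 0)`, so `x (x (x x))` has
total weight `0` while `(x x)(x x)` has total weight `2`.
-/

/-- Powers in a (not necessarily associative) algebra with multiplication `mul`,
defined by `x^1 = x` and `x^{m+1} = x · x^m` (with junk value `0` at exponent `0`). -/
def gonPow {K A : Type*} [Field K] [AddCommGroup A] [Module K A]
    (mul : A →ₗ[K] A →ₗ[K] A) (x : A) : ℕ → A
  | 0 => 0
  | 1 => x
  | m + 2 => mul x (gonPow mul x (m + 1))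

def IsFourthPowerAssoc {M : Type*} (mul : M → M → M) (x : M) : Prop :=
  mul x (mul x (mul x x)) = mul (mul x x) (mul x x)

section WeightedMagma

variable {K M : Type*} [Field K] {mul : M → M → M} {E F : M → K}

theorem weight_mul_self_eq_of_isFourthPowerAssoc
    (hω : ∀ w w', E (mul w w') + F (mul w w') = E w * F w' + E w' * F w)
    {x : M} (hE : E x = 1) (hF : F x = 1) (hx : IsFourthPowerAssoc mul x) :
    E (mul x x) = F (mul x x) := by
  have hx2 := hω x x
  have hx3 := hω x (mul x x)
  have hx4 := hω x (mul x (mul x x))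
  have hx22 := hω (mul x x) (mul x x)
  rw [hx] at hx4
  rw [hE, hF] at hx2 hx3 hx4
  have hsq : (E (mul x x) - F (mul x x)) ^ 2 = 0 := by
    linear_combination (E (mul x x) + F (mul x x)) * hx2 - 2 * hx3 - 2 * hx4 + 2 * hx22
  exact sub_eq_zero.mp (pow_eq_zero_iff two_ne_zero |>.mp hsq)

theorem not_isFourthPowerAssoc_of_weight (h2 : (2 : K) ≠ 0)
    (hω : ∀ w w', E (mul w w') + F (mul w w') = E w * F w' + E w' * F w)
    (hEF : ∀ w w', E (mul w w') = F (mul w w'))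
    {x : M} (hE : E x = 1) (hF : F x = -1) : ¬ IsFourthPowerAssoc mul x := by
  intro hx
  have hhalf : ∀ w w', 2 * F (mul w w') = E w * F w' + E w' * F w := fun w w' => by
    rw [← hω, hEF]; ring
  have hx2 : F (mul x x) = -1 := by
    have := hhalf x x
    rw [hE, hF] at this
    exact mul_left_cancel₀ h2 (by linear_combination this)
  have hx3 : F (mul x (mul x x)) = 0 := by
    have := hhalf x (mul x x)
    rw [hE, hF, hEF, hx2] at this
    exact (mul_eq_zero.mp (by linear_combination this)).resolve_left h2
  have hx4 := hhalf x (mul x (mul x x))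
  have hx22 := hhalf (mul x x) (mul x x)
  rw [hx] at hx4
  rw [hE, hF, hEF, hx3] at hx4
  rw [hEF, hx2] at hx22
  exact h2 (by linear_combination hx4 - hx22)

end WeightedMagma

namespace Module.Basis

variable {K A ι κ : Type*} [Field K] [AddCommGroup A] [Module K A] (b : Basis (ι ⊕ κ) K A)

noncomputable def weightInl [Fintype ι] : A →ₗ[K] K := ∑ i, b.coord (Sum.inl i)

noncomputable def weightInr [Fintype κ] : A →ₗ[K] K := ∑ p, b.coord (Sum.inr p)

section

variable [Fintype ι]

@[simp]
theorem weightInl_inl (i : ι) : b.weightInl (b (Sum.inl i)) = 1 := by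
  classical
  simp [weightInl, Finsupp.single_apply]

@[simp]
theorem weightInl_inr (p : κ) : b.weightInl (b (Sum.inr p)) = 0 := by
  simp [weightInl]

end

section

variable [Fintype κ]

@[simp]
theorem weightInr_inl (i : ι) : b.weightInr (b (Sum.inl i)) = 0 := by
  simp [weightInr]

@[simp]
theorem weightInr_inr (p : κ) : b.weightInr (b (Sum.inr p)) = 1 := by
  classical
  simp [weightInr, Finsupp.single_apply]

end

variable [Fintype ι] [Fintype κ] (mul : A →ₗ[K] A →ₗ[K] A)

theorem weightInl_add_weightInr_mul
    (hee : ∀ i j, mul (b (Sum.inl i)) (b (Sum.inl j)) = 0)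
    (hff : ∀ p q, mul (b (Sum.inr p)) (b (Sum.inr q)) = 0)
    (hfe : ∀ i p, mul (b (Sum.inr p)) (b (Sum.inl i)) = mul (b (Sum.inl i)) (b (Sum.inr p)))
    (hef : ∀ i p, b.weightInl (mul (b (Sum.inl i)) (b (Sum.inr p))) +
      b.weightInr (mul (b (Sum.inl i)) (b (Sum.inr p))) = 1)
    (w w' : A) :
    b.weightInl (mul w w') + b.weightInr (mul w w') =
      b.weightInl w * b.weightInr w' + b.weightInl w' * b.weightInr w := by
  have hbilin : mul.compr₂ (b.weightInl + b.weightInr) =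
      (LinearMap.mul K K).compl₁₂ b.weightInl b.weightInr +
        ((LinearMap.mul K K).compl₁₂ b.weightInl b.weightInr).flip := by
    refine LinearMap.ext_basis b b fun s t => ?_
    rcases s with i | p <;> rcases t with j | q <;> simp [hee, hff, hfe, hef]
  simpa using LinearMap.congr_fun₂ hbilin w w'

theorem weightInl_mul_eq_weightInr_mul
    (hee : ∀ i j, mul (b (Sum.inl i)) (b (Sum.inl j)) = 0)
    (hff : ∀ p q, mul (b (Sum.inr p)) (b (Sum.inr q)) = 0)
    (hfe : ∀ i p, mul (b (Sum.inr p)) (b (Sum.inl i)) = mul (b (Sum.inl i)) (b (Sum.inr p)))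
    (hef : ∀ i p, b.weightInl (mul (b (Sum.inl i)) (b (Sum.inr p))) =
      b.weightInr (mul (b (Sum.inl i)) (b (Sum.inr p))))
    (w w' : A) :
    b.weightInl (mul w w') = b.weightInr (mul w w') := by
  have hbilin : mul.compr₂ b.weightInl = mul.compr₂ b.weightInr := by
    refine LinearMap.ext_basis b b fun s t => ?_
    rcases s with i | p <;> rcases t with j | q <;> simp [hee, hff, hfe, hef]
  exact LinearMap.congr_fun₂ hbilin w w'

end Module.Basis

/-- No gonosomal algebra is power associative. -/
theorem gonosomal_not_powerAssociative
    {K : Type*} [Field K] (hchar : ringChar K ≠ 2)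
    {n ν : ℕ} (hn : 1 ≤ n) (hν : 1 ≤ ν)
    {A : Type*} [AddCommGroup A] [Module K A]
    (mul : A →ₗ[K] A →ₗ[K] A)
    (b : Module.Basis (Fin n ⊕ Fin ν) K A)
    (γ : Fin n → Fin ν → Fin n → K) (γt : Fin n → Fin ν → Fin ν → K)
    (hee : ∀ i j : Fin n, mul (b (Sum.inl i)) (b (Sum.inl j)) = 0)
    (hff : ∀ p q : Fin ν, mul (b (Sum.inr p)) (b (Sum.inr q)) = 0)
    (hef : ∀ (i : Fin n) (p : Fin ν),
      mul (b (Sum.inl i)) (b (Sum.inr p)) =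
        (∑ k, γ i p k • b (Sum.inl k)) + (∑ r, γt i p r • b (Sum.inr r)))
    (hfe : ∀ (i : Fin n) (p : Fin ν),
      mul (b (Sum.inr p)) (b (Sum.inl i)) = mul (b (Sum.inl i)) (b (Sum.inr p)))
    (hsum : ∀ (i : Fin n) (p : Fin ν),
      (∑ k, γ i p k) + (∑ r, γt i p r) = 1) :
    ¬ (∀ (x : A) (i j : ℕ), 1 ≤ i → 1 ≤ j →
        gonPow mul x (i + j) = mul (gonPow mul x i) (gonPow mul x j)) := by
  intro h
  have h2 : (2 : K) ≠ 0 := Ring.two_ne_zero hchar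
  have hx : ∀ x, IsFourthPowerAssoc (fun w w' => mul w w') x := fun x =>
    h x 2 2 one_le_two one_le_two
  have hω := b.weightInl_add_weightInr_mul mul hee hff hfe fun i p => by
    rw [hef]; simpa using hsum i p
  have hEF : ∀ i p, b.weightInl (mul (b (Sum.inl i)) (b (Sum.inr p))) =
      b.weightInr (mul (b (Sum.inl i)) (b (Sum.inr p))) := fun i p => by
    have hsq : mul (b (Sum.inl i) + b (Sum.inr p)) (b (Sum.inl i) + b (Sum.inr p)) =
        (2 : K) • mul (b (Sum.inl i)) (b (Sum.inr p)) := by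
      simp only [map_add, LinearMap.add_apply, hee, hff, hfe, two_smul, zero_add, add_zero]
    have := weight_mul_self_eq_of_isFourthPowerAssoc hω
      (x := b (Sum.inl i) + b (Sum.inr p)) (by simp) (by simp) (hx _)
    rw [hsq, map_smul, map_smul, smul_eq_mul, smul_eq_mul] at this
    exact mul_left_cancel₀ h2 this
  exact not_isFourthPowerAssoc_of_weight h2 hω
    (b.weightInl_mul_eq_weightInr_mul mul hee hff hfe hEF)
    (x := b (Sum.inl ⟨0, hn⟩) - b (Sum.inr ⟨0, hν⟩)) (by simp) (by simp) (hx _)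
end

section
/- No gonosomal algebra satisfies the Jacobi identity: for any gonosomal algebra A of type (n,ν) over K, there exist x, y, z ∈ A with (xy)z + (yz)x + (zx)y ≠ 0. -/
/-!
Specialise the Jacobi identity to `(e, f, e)` and `(f, e, f)` for basis vectors `e = e_i`,
`f = ẽ_p`: since `e² = f² = 0` and `ef = fe`, it collapses to `2 (ef)e = 0` and `2 (ef)f = 0`.
The linear form `ω` sending every basis vector to `1` takes the value `1` on every product
`e_j ẽ_q`, so expanding `ef` in the basis gives `ω((ef)e) = Σ_r γ̃_{ipr}` and
`ω((ef)f) = Σ_k γ_{ipk}`, which add up to `1`, not `0`.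
-/

open Module

lemma mul_mul_self_eq_zero_of_jacobi {K A : Type*} [Field K] [AddCommGroup A] [Module K A]
    (h2 : (2 : K) ≠ 0) (mul : A →ₗ[K] A →ₗ[K] A) {x y : A}
    (hxx : mul x x = 0) (hyx : mul y x = mul x y)
    (hJ : mul (mul x y) x + mul (mul y x) x + mul (mul x x) y = 0) :
    mul (mul x y) x = 0 := by
  rw [hyx, hxx, map_zero, LinearMap.zero_apply, add_zero, ← two_smul K] at hJ
  exact (smul_eq_zero.mp hJ).resolve_left h2

section Gonosomal

variable {K A : Type*} [Field K] [AddCommGroup A] [Module K A] {n ν : ℕ}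
  (mul : A →ₗ[K] A →ₗ[K] A) (b : Basis (Fin n ⊕ Fin ν) K A)
  {γ : Fin n → Fin ν → Fin n → K} {γt : Fin n → Fin ν → Fin ν → K}

lemma constr_one_mul_inl_inr
    (hef : ∀ (i : Fin n) (p : Fin ν),
      mul (b (Sum.inl i)) (b (Sum.inr p)) =
        (∑ k, γ i p k • b (Sum.inl k)) + (∑ r, γt i p r • b (Sum.inr r)))
    (hsum : ∀ (i : Fin n) (p : Fin ν), (∑ k, γ i p k) + (∑ r, γt i p r) = 1)
    (i : Fin n) (p : Fin ν) :
    b.constr K (fun _ => (1 : K)) (mul (b (Sum.inl i)) (b (Sum.inr p))) = 1 := by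
  simpa only [hef, map_add, map_sum, map_smul, Basis.constr_basis, smul_eq_mul, mul_one]
    using hsum i p

lemma constr_one_mul_mul_inl
    (hee : ∀ i j : Fin n, mul (b (Sum.inl i)) (b (Sum.inl j)) = 0)
    (hef : ∀ (i : Fin n) (p : Fin ν),
      mul (b (Sum.inl i)) (b (Sum.inr p)) =
        (∑ k, γ i p k • b (Sum.inl k)) + (∑ r, γt i p r • b (Sum.inr r)))
    (hfe : ∀ (i : Fin n) (p : Fin ν),
      mul (b (Sum.inr p)) (b (Sum.inl i)) = mul (b (Sum.inl i)) (b (Sum.inr p)))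
    (hsum : ∀ (i : Fin n) (p : Fin ν), (∑ k, γ i p k) + (∑ r, γt i p r) = 1)
    (i j : Fin n) (p : Fin ν) :
    b.constr K (fun _ => (1 : K)) (mul (mul (b (Sum.inl i)) (b (Sum.inr p))) (b (Sum.inl j))) =
      ∑ r, γt i p r := by
  simp [hef i p, hee, hfe, constr_one_mul_inl_inr mul b hef hsum]

lemma constr_one_mul_mul_inr
    (hff : ∀ p q : Fin ν, mul (b (Sum.inr p)) (b (Sum.inr q)) = 0)
    (hef : ∀ (i : Fin n) (p : Fin ν),
      mul (b (Sum.inl i)) (b (Sum.inr p)) =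
        (∑ k, γ i p k • b (Sum.inl k)) + (∑ r, γt i p r • b (Sum.inr r)))
    (hsum : ∀ (i : Fin n) (p : Fin ν), (∑ k, γ i p k) + (∑ r, γt i p r) = 1)
    (i : Fin n) (p q : Fin ν) :
    b.constr K (fun _ => (1 : K)) (mul (mul (b (Sum.inl i)) (b (Sum.inr p))) (b (Sum.inr q))) =
      ∑ k, γ i p k := by
  simp [hef i p, hff, constr_one_mul_inl_inr mul b hef hsum]

end Gonosomal

/-- No gonosomal algebra satisfies the Jacobi identity: there exist `x, y, z`
with `(xy)z + (yz)x + (zx)y ≠ 0`. -/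
theorem gonosomal_not_jacobi
    {K : Type*} [Field K] (hchar : ringChar K ≠ 2)
    {n ν : ℕ} (hn : 1 ≤ n) (hν : 1 ≤ ν)
    {A : Type*} [AddCommGroup A] [Module K A]
    (mul : A →ₗ[K] A →ₗ[K] A)
    (b : Module.Basis (Fin n ⊕ Fin ν) K A)
    (γ : Fin n → Fin ν → Fin n → K) (γt : Fin n → Fin ν → Fin ν → K)
    (hee : ∀ i j : Fin n, mul (b (Sum.inl i)) (b (Sum.inl j)) = 0)
    (hff : ∀ p q : Fin ν, mul (b (Sum.inr p)) (b (Sum.inr q)) = 0)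
    (hef : ∀ (i : Fin n) (p : Fin ν),
      mul (b (Sum.inl i)) (b (Sum.inr p)) =
        (∑ k, γ i p k • b (Sum.inl k)) + (∑ r, γt i p r • b (Sum.inr r)))
    (hfe : ∀ (i : Fin n) (p : Fin ν),
      mul (b (Sum.inr p)) (b (Sum.inl i)) = mul (b (Sum.inl i)) (b (Sum.inr p)))
    (hsum : ∀ (i : Fin n) (p : Fin ν),
      (∑ k, γ i p k) + (∑ r, γt i p r) = 1) :
    ∃ x y z : A, mul (mul x y) z + mul (mul y z) x + mul (mul z x) y ≠ 0 := by
  by_contra! hJ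
  have h2 : (2 : K) ≠ 0 := Ring.two_ne_zero hchar
  let i : Fin n := ⟨0, hn⟩
  let p : Fin ν := ⟨0, hν⟩
  have hefe : mul (mul (b (Sum.inl i)) (b (Sum.inr p))) (b (Sum.inl i)) = 0 :=
    mul_mul_self_eq_zero_of_jacobi h2 mul (hee i i) (hfe i p) (hJ _ _ _)
  have heff : mul (mul (b (Sum.inl i)) (b (Sum.inr p))) (b (Sum.inr p)) = 0 := by
    rw [← hfe i p]
    exact mul_mul_self_eq_zero_of_jacobi h2 mul (hff p p) (hfe i p).symm (hJ _ _ _)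
  have h := hsum i p
  rw [← constr_one_mul_mul_inl mul b hee hef hfe hsum i i p,
    ← constr_one_mul_mul_inr mul b hff hef hsum i p p, hefe, heff, map_zero, add_zero] at h
  exact zero_ne_one h
end

section
/- No gonosomal algebra is alternative: for any gonosomal algebra A of type (n,ν) over K, it is not the case that both x²y = x(xy) and yx² = (yx)x hold for all x, y ∈ A. -/
/-!
Let `w` be the sum-of-coordinates functional, split as `w = wₑ + w_f` into its parts on the
`e`-basis and on the `ẽ`-basis. The defining relations give `w(e_i y) = w_f(y)` and
`w(x ẽ_p) = wₑ(x)`. Left alternativity yields `e(eẽ) = (ee)ẽ = 0`, and right alternativity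
`(eẽ)ẽ = e(ẽẽ) = 0`, so `w_f(eẽ) = wₑ(eẽ) = 0`; but `w(eẽ) = 1`.
-/

namespace Module.Basis

variable {K A ι κ : Type*} [CommSemiring K] [AddCommMonoid A] [Module K A]
  (b : Basis (ι ⊕ κ) K A)

noncomputable def sumCoordsInl [Fintype ι] : A →ₗ[K] K := ∑ k, b.coord (Sum.inl k)

noncomputable def sumCoordsInr [Fintype κ] : A →ₗ[K] K := ∑ r, b.coord (Sum.inr r)

theorem sumCoords_eq_sumCoordsInl_add_sumCoordsInr [Fintype ι] [Fintype κ] (x : A) :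
    b.sumCoords x = b.sumCoordsInl x + b.sumCoordsInr x := by
  rw [coe_sumCoords_of_fintype, Fintype.sum_sum_type, LinearMap.add_apply]
  rfl

theorem sumCoordsInl_apply_basis [Fintype ι] (j : ι ⊕ κ) :
    b.sumCoordsInl (b j) = if j.isLeft then 1 else 0 := by
  cases j <;> simp [sumCoordsInl, Finsupp.single_apply_left Sum.inl_injective]

theorem sumCoordsInr_apply_basis [Fintype κ] (j : ι ⊕ κ) :
    b.sumCoordsInr (b j) = if j.isRight then 1 else 0 := by
  cases j <;> simp [sumCoordsInr, Finsupp.single_apply_left Sum.inr_injective]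

variable (mul : A →ₗ[K] A →ₗ[K] A)

theorem sumCoords_mul_inl [Fintype κ] {i : ι}
    (hinl : ∀ j, mul (b (Sum.inl i)) (b (Sum.inl j)) = 0)
    (hinr : ∀ p, b.sumCoords (mul (b (Sum.inl i)) (b (Sum.inr p))) = 1) (y : A) :
    b.sumCoords (mul (b (Sum.inl i)) y) = b.sumCoordsInr y := by
  suffices b.sumCoords ∘ₗ mul (b (Sum.inl i)) = b.sumCoordsInr from LinearMap.congr_fun this y
  refine b.ext fun j => ?_
  cases j <;> simp only [LinearMap.comp_apply, hinl, hinr, map_zero, sumCoordsInr_apply_basis,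
    Sum.isRight_inl, Sum.isRight_inr, if_true, Bool.false_eq_true, if_false]

theorem sumCoords_mul_inr [Fintype ι] {p : κ}
    (hinr : ∀ q, mul (b (Sum.inr q)) (b (Sum.inr p)) = 0)
    (hinl : ∀ i, b.sumCoords (mul (b (Sum.inl i)) (b (Sum.inr p))) = 1) (x : A) :
    b.sumCoords (mul x (b (Sum.inr p))) = b.sumCoordsInl x := by
  suffices b.sumCoords ∘ₗ mul.flip (b (Sum.inr p)) = b.sumCoordsInl from
    LinearMap.congr_fun this x
  refine b.ext fun j => ?_
  cases j <;> simp only [LinearMap.comp_apply, LinearMap.flip_apply, hinl, hinr, map_zero,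
    sumCoordsInl_apply_basis, Sum.isLeft_inl, Sum.isLeft_inr, if_true, Bool.false_eq_true, if_false]

end Module.Basis

theorem gonosomal_not_alternative_general
    {K : Type*} [Field K]
    {n ν : ℕ} (hn : 1 ≤ n) (hν : 1 ≤ ν)
    {A : Type*} [AddCommGroup A] [Module K A]
    (mul : A →ₗ[K] A →ₗ[K] A)
    (b : Module.Basis (Fin n ⊕ Fin ν) K A)
    (γ : Fin n → Fin ν → Fin n → K) (γt : Fin n → Fin ν → Fin ν → K)
    (hee : ∀ i j : Fin n, mul (b (Sum.inl i)) (b (Sum.inl j)) = 0)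
    (hff : ∀ p q : Fin ν, mul (b (Sum.inr p)) (b (Sum.inr q)) = 0)
    (hef : ∀ (i : Fin n) (p : Fin ν),
      mul (b (Sum.inl i)) (b (Sum.inr p)) =
        (∑ k, γ i p k • b (Sum.inl k)) + (∑ r, γt i p r • b (Sum.inr r)))
    (hsum : ∀ (i : Fin n) (p : Fin ν),
      (∑ k, γ i p k) + (∑ r, γt i p r) = 1) :
    ¬ ((∀ x y : A, mul (mul x x) y = mul x (mul x y)) ∧
       (∀ x y : A, mul y (mul x x) = mul (mul y x) x)) := by
  rintro ⟨hL, hR⟩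
  have hweight (i : Fin n) (p : Fin ν) :
      b.sumCoords (mul (b (Sum.inl i)) (b (Sum.inr p))) = 1 := by
    simp only [hef, map_add, map_sum, map_smul, Module.Basis.sumCoords_self_apply, smul_eq_mul,
      mul_one, hsum]
  set e := b (Sum.inl ⟨0, hn⟩)
  set f := b (Sum.inr ⟨0, hν⟩)
  have hinr : b.sumCoordsInr (mul e f) = 0 := by
    rw [← b.sumCoords_mul_inl mul (hee _) (hweight _), ← hL, hee, map_zero,
      LinearMap.zero_apply, map_zero]
  have hinl : b.sumCoordsInl (mul e f) = 0 := by
    rw [← b.sumCoords_mul_inr mul (hff · _) (hweight · _), ← hR, hff, map_zero, map_zero]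
  have := hweight ⟨0, hn⟩ ⟨0, hν⟩
  rw [b.sumCoords_eq_sumCoordsInl_add_sumCoordsInr, hinl, hinr, add_zero] at this
  exact zero_ne_one this

/-- No gonosomal algebra is alternative: it is not the case that both
`x²y = x(xy)` and `yx² = (yx)x` hold for all `x, y`. -/
theorem gonosomal_not_alternative
    {K : Type*} [Field K] (hchar : ringChar K ≠ 2)
    {n ν : ℕ} (hn : 1 ≤ n) (hν : 1 ≤ ν)
    {A : Type*} [AddCommGroup A] [Module K A]
    (mul : A →ₗ[K] A →ₗ[K] A)
    (b : Module.Basis (Fin n ⊕ Fin ν) K A)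
    (γ : Fin n → Fin ν → Fin n → K) (γt : Fin n → Fin ν → Fin ν → K)
    (hee : ∀ i j : Fin n, mul (b (Sum.inl i)) (b (Sum.inl j)) = 0)
    (hff : ∀ p q : Fin ν, mul (b (Sum.inr p)) (b (Sum.inr q)) = 0)
    (hef : ∀ (i : Fin n) (p : Fin ν),
      mul (b (Sum.inl i)) (b (Sum.inr p)) =
        (∑ k, γ i p k • b (Sum.inl k)) + (∑ r, γt i p r • b (Sum.inr r)))
    (hfe : ∀ (i : Fin n) (p : Fin ν),
      mul (b (Sum.inr p)) (b (Sum.inl i)) = mul (b (Sum.inl i)) (b (Sum.inr p)))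
    (hsum : ∀ (i : Fin n) (p : Fin ν),
      (∑ k, γ i p k) + (∑ r, γt i p r) = 1) :
    ¬ ((∀ x y : A, mul (mul x x) y = mul x (mul x y)) ∧
       (∀ x y : A, mul y (mul x x) = mul (mul y x) x)) :=
  gonosomal_not_alternative_general hn hν mul b γ γt hee hff hef hsum
end

section
/- (a) The gonosomal operator W maps the nonnegative orthant ℝ₊^{n+ν} into itself if and only if γ_{ijk} ≥ 0 and γ̃_{ijr} ≥ 0 for all 1 ≤ i,k ≤ n and 1 ≤ j,r ≤ ν. (b) For every z in the simplex S^{n+ν−1} = {z ∈ ℝ^{n+ν} : all coordinates ≥ 0 and ϖ(z) = 1}, one has ϖ(W(z)) ≤ 1/4. -/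
/-- The gonosomal operator `W` on `ℝ^{n+ν}`. -/
noncomputable def gonW {n ν : ℕ} (γ : Fin n → Fin ν → Fin n → ℝ)
    (γt : Fin n → Fin ν → Fin ν → ℝ)
    (z : (Fin n → ℝ) × (Fin ν → ℝ)) : (Fin n → ℝ) × (Fin ν → ℝ) :=
  (fun k => ∑ i, ∑ j, γ i j k * z.1 i * z.2 j,
   fun r => ∑ i, ∑ j, γt i j r * z.1 i * z.2 j)

/-- The linear form `ϖ(z) = Σ x_i + Σ y_j`. -/
noncomputable def gonPi {n ν : ℕ} (z : (Fin n → ℝ) × (Fin ν → ℝ)) : ℝ :=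
  (∑ i, z.1 i) + (∑ j, z.2 j)

/-- (a) `W` preserves the nonnegative orthant iff all structure constants are
nonnegative; (b) `ϖ(W(z)) ≤ 1/4` on the simplex. -/
theorem gonosomal_orthant_and_simplex
    {n ν : ℕ} (hn : 1 ≤ n) (hν : 1 ≤ ν)
    (γ : Fin n → Fin ν → Fin n → ℝ) (γt : Fin n → Fin ν → Fin ν → ℝ)
    (hsum : ∀ (i : Fin n) (j : Fin ν), (∑ k, γ i j k) + (∑ r, γt i j r) = 1) :
    ((∀ z : (Fin n → ℝ) × (Fin ν → ℝ),
        ((∀ i, 0 ≤ z.1 i) ∧ (∀ j, 0 ≤ z.2 j)) →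
        ((∀ k, 0 ≤ (gonW γ γt z).1 k) ∧ (∀ r, 0 ≤ (gonW γ γt z).2 r))) ↔
      ((∀ i j k, 0 ≤ γ i j k) ∧ (∀ i j r, 0 ≤ γt i j r))) ∧
    (∀ z : (Fin n → ℝ) × (Fin ν → ℝ),
      (∀ i, 0 ≤ z.1 i) → (∀ j, 0 ≤ z.2 j) → gonPi z = 1 →
      gonPi (gonW γ γt z) ≤ 1 / 4) := by
  constructor
  · constructor
    · intro h
      constructor
      · intro i j k
        have := (h ((fun i' => if i' = i then (1:ℝ) else 0),
            (fun j' => if j' = j then (1:ℝ) else 0))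
            ⟨fun i' => by dsimp; split <;> norm_num,
             fun j' => by dsimp; split <;> norm_num⟩).1 k
        simpa [gonW, mul_ite, Finset.sum_ite_eq'] using this
      · intro i j r
        have := (h ((fun i' => if i' = i then (1:ℝ) else 0),
            (fun j' => if j' = j then (1:ℝ) else 0))
            ⟨fun i' => by dsimp; split <;> norm_num,
             fun j' => by dsimp; split <;> norm_num⟩).2 r
        simpa [gonW, mul_ite, Finset.sum_ite_eq'] using this
    · rintro ⟨hγ, hγt⟩ z ⟨hx, hy⟩
      simp only [gonW]
      constructor
      · intro k
        exact Finset.sum_nonneg fun i _ => Finset.sum_nonneg fun j _ =>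
          mul_nonneg (mul_nonneg (hγ i j k) (hx i)) (hy j)
      · intro r
        exact Finset.sum_nonneg fun i _ => Finset.sum_nonneg fun j _ =>
          mul_nonneg (mul_nonneg (hγt i j r) (hx i)) (hy j)
  · intro z hx hy hpi
    have e1 : (∑ k, ∑ i, ∑ j, γ i j k * z.1 i * z.2 j)
        = ∑ i, ∑ j, (∑ k, γ i j k) * (z.1 i * z.2 j) := by
      rw [Finset.sum_comm]
      refine Finset.sum_congr rfl fun i _ => ?_
      rw [Finset.sum_comm]
      refine Finset.sum_congr rfl fun j _ => ?_
      rw [Finset.sum_mul]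
      exact Finset.sum_congr rfl fun k _ => by ring
    have e2 : (∑ r, ∑ i, ∑ j, γt i j r * z.1 i * z.2 j)
        = ∑ i, ∑ j, (∑ r, γt i j r) * (z.1 i * z.2 j) := by
      rw [Finset.sum_comm]
      refine Finset.sum_congr rfl fun i _ => ?_
      rw [Finset.sum_comm]
      refine Finset.sum_congr rfl fun j _ => ?_
      rw [Finset.sum_mul]
      exact Finset.sum_congr rfl fun r _ => by ring
    have key : gonPi (gonW γ γt z) = (∑ i, z.1 i) * (∑ j, z.2 j) := by
      simp only [gonPi, gonW]
      rw [e1, e2, ← Finset.sum_add_distrib]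
      trans (∑ i, ∑ j, z.1 i * z.2 j)
      · refine Finset.sum_congr rfl fun i _ => ?_
        rw [← Finset.sum_add_distrib]
        refine Finset.sum_congr rfl fun j _ => ?_
        rw [← add_mul, hsum i j, one_mul]
      · exact (Finset.sum_mul_sum _ _ _ _).symm
    have hX : (0:ℝ) ≤ ∑ i, z.1 i := Finset.sum_nonneg fun i _ => hx i
    have hY : (0:ℝ) ≤ ∑ j, z.2 j := Finset.sum_nonneg fun j _ => hy j
    have hXY : (∑ i, z.1 i) + (∑ j, z.2 j) = 1 := hpi
    rw [key]
    nlinarith [sq_nonneg ((∑ i, z.1 i) - (∑ j, z.2 j))]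
end

section
/- Assume W is stochastic. Let z ∈ ℝ₊^{n+ν} and t ≥ 1 be such that ϖ(W^t(z)) > 0, and write the normalized iterate W^t(z)/ϖ(W^t(z)) = (x_1^{(t)},…,x_n^{(t)}, y_1^{(t)},…,y_ν^{(t)}). Then for every 1 ≤ k ≤ n, min_{i,j} γ_{ijk} ≤ x_k^{(t)} ≤ max_{i,j} γ_{ijk}, and for every 1 ≤ r ≤ ν, min_{i,j} γ̃_{ijr} ≤ y_r^{(t)} ≤ max_{i,j} γ̃_{ijr}. -/
lemma gonW_iter_nonneg {n ν : ℕ} (γ : Fin n → Fin ν → Fin n → ℝ)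
    (γt : Fin n → Fin ν → Fin ν → ℝ)
    (hγ : ∀ i j k, 0 ≤ γ i j k) (hγt : ∀ i j r, 0 ≤ γt i j r)
    (z : (Fin n → ℝ) × (Fin ν → ℝ))
    (hx : ∀ i, 0 ≤ z.1 i) (hy : ∀ j, 0 ≤ z.2 j) (s : ℕ) :
    (∀ i, 0 ≤ ((gonW γ γt)^[s] z).1 i) ∧ (∀ j, 0 ≤ ((gonW γ γt)^[s] z).2 j) := by
  induction s with
  | zero => exact ⟨hx, hy⟩
  | succ s ih =>
    rw [Function.iterate_succ_apply']
    refine ⟨fun k => ?_, fun r => ?_⟩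
    · simp only [gonW]
      exact Finset.sum_nonneg fun i _ => Finset.sum_nonneg fun j _ =>
        mul_nonneg (mul_nonneg (hγ i j k) (ih.1 i)) (ih.2 j)
    · simp only [gonW]
      exact Finset.sum_nonneg fun i _ => Finset.sum_nonneg fun j _ =>
        mul_nonneg (mul_nonneg (hγt i j r) (ih.1 i)) (ih.2 j)

/-- For a stochastic gonosomal operator, the coordinates of the normalized
iterate `W^t(z)/ϖ(W^t(z))` (for `t ≥ 1`, when `ϖ(W^t(z)) > 0`) lie between the
minimum and the maximum of the corresponding structure constants. -/
theorem gonosomal_normalized_coordinate_bounds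
    {n ν : ℕ} (hn : 0 < n) (hν : 0 < ν)
    (γ : Fin n → Fin ν → Fin n → ℝ) (γt : Fin n → Fin ν → Fin ν → ℝ)
    (hγ : ∀ i j k, 0 ≤ γ i j k) (hγt : ∀ i j r, 0 ≤ γt i j r)
    (hsum : ∀ (i : Fin n) (j : Fin ν), (∑ k, γ i j k) + (∑ r, γt i j r) = 1)
    (z : (Fin n → ℝ) × (Fin ν → ℝ))
    (hx : ∀ i, 0 ≤ z.1 i) (hy : ∀ j, 0 ≤ z.2 j)
    (t : ℕ) (ht : 1 ≤ t) (hpos : 0 < gonPi ((gonW γ γt)^[t] z)) :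
    (∀ k : Fin n,
      (Finset.univ : Finset (Fin n × Fin ν)).inf'
          ⟨(⟨0, hn⟩, ⟨0, hν⟩), Finset.mem_univ _⟩ (fun p => γ p.1 p.2 k) ≤
        ((gonW γ γt)^[t] z).1 k / gonPi ((gonW γ γt)^[t] z) ∧
      ((gonW γ γt)^[t] z).1 k / gonPi ((gonW γ γt)^[t] z) ≤
        (Finset.univ : Finset (Fin n × Fin ν)).sup'
          ⟨(⟨0, hn⟩, ⟨0, hν⟩), Finset.mem_univ _⟩ (fun p => γ p.1 p.2 k)) ∧
    (∀ r : Fin ν,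
      (Finset.univ : Finset (Fin n × Fin ν)).inf'
          ⟨(⟨0, hn⟩, ⟨0, hν⟩), Finset.mem_univ _⟩ (fun p => γt p.1 p.2 r) ≤
        ((gonW γ γt)^[t] z).2 r / gonPi ((gonW γ γt)^[t] z) ∧
      ((gonW γ γt)^[t] z).2 r / gonPi ((gonW γ γt)^[t] z) ≤
        (Finset.univ : Finset (Fin n × Fin ν)).sup'
          ⟨(⟨0, hn⟩, ⟨0, hν⟩), Finset.mem_univ _⟩ (fun p => γt p.1 p.2 r)) := by
  obtain ⟨s, rfl⟩ : ∃ s, t = s + 1 :=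
    ⟨t - 1, (Nat.succ_pred_eq_of_pos ht).symm⟩
  rw [Function.iterate_succ_apply'] at hpos ⊢
  set w := (gonW γ γt)^[s] z with hw
  obtain ⟨hwx, hwy⟩ := gonW_iter_nonneg γ γt hγ hγt z hx hy s
  have hXY : ∀ (i : Fin n) (j : Fin ν), 0 ≤ w.1 i * w.2 j :=
    fun i j => mul_nonneg (hwx i) (hwy j)
  -- ϖ(W w) = Σᵢ Σⱼ xᵢ yⱼ
  have hS : gonPi (gonW γ γt w) = ∑ i, ∑ j, w.1 i * w.2 j := by
    simp only [gonPi, gonW]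
    rw [Finset.sum_comm, Finset.sum_comm (f := fun r (i : Fin n) => ∑ j, γt i j r * w.1 i * w.2 j)]
    rw [← Finset.sum_add_distrib]
    refine Finset.sum_congr rfl fun i _ => ?_
    rw [Finset.sum_comm, Finset.sum_comm (f := fun r (j : Fin ν) => γt i j r * w.1 i * w.2 j)]
    rw [← Finset.sum_add_distrib]
    refine Finset.sum_congr rfl fun j _ => ?_
    simp only [← Finset.sum_mul]
    rw [← add_mul, ← add_mul, hsum, one_mul]
  have hSpos : 0 < ∑ i, ∑ j, w.1 i * w.2 j := hS ▸ hpos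
  constructor
  · intro k
    have hm : ∀ (i : Fin n) (j : Fin ν),
        (Finset.univ : Finset (Fin n × Fin ν)).inf'
          ⟨(⟨0, hn⟩, ⟨0, hν⟩), Finset.mem_univ _⟩ (fun p => γ p.1 p.2 k) ≤ γ i j k :=
      fun i j => Finset.inf'_le _ (Finset.mem_univ (i, j))
    have hM : ∀ (i : Fin n) (j : Fin ν),
        γ i j k ≤ (Finset.univ : Finset (Fin n × Fin ν)).sup'
          ⟨(⟨0, hn⟩, ⟨0, hν⟩), Finset.mem_univ _⟩ (fun p => γ p.1 p.2 k) :=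
      fun i j => Finset.le_sup' (f := fun p => γ p.1 p.2 k) (Finset.mem_univ (i, j))
    constructor
    · rw [le_div_iff₀ hpos, hS, Finset.mul_sum]
      show ∑ i, _ * (∑ j, w.1 i * w.2 j) ≤ (gonW γ γt w).1 k
      simp only [gonW, Finset.mul_sum]
      refine Finset.sum_le_sum fun i _ => Finset.sum_le_sum fun j _ => ?_
      rw [← mul_assoc]
      exact mul_le_mul_of_nonneg_right
        (mul_le_mul_of_nonneg_right (hm i j) (hwx i)) (hwy j)
    · rw [div_le_iff₀ hpos, hS, Finset.mul_sum]
      show (gonW γ γt w).1 k ≤ ∑ i, _ * (∑ j, w.1 i * w.2 j)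
      simp only [gonW, Finset.mul_sum]
      refine Finset.sum_le_sum fun i _ => Finset.sum_le_sum fun j _ => ?_
      rw [← mul_assoc]
      exact mul_le_mul_of_nonneg_right
        (mul_le_mul_of_nonneg_right (hM i j) (hwx i)) (hwy j)
  · intro r
    have hm : ∀ (i : Fin n) (j : Fin ν),
        (Finset.univ : Finset (Fin n × Fin ν)).inf'
          ⟨(⟨0, hn⟩, ⟨0, hν⟩), Finset.mem_univ _⟩ (fun p => γt p.1 p.2 r) ≤ γt i j r :=
      fun i j => Finset.inf'_le _ (Finset.mem_univ (i, j))
    have hM : ∀ (i : Fin n) (j : Fin ν),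
        γt i j r ≤ (Finset.univ : Finset (Fin n × Fin ν)).sup'
          ⟨(⟨0, hn⟩, ⟨0, hν⟩), Finset.mem_univ _⟩ (fun p => γt p.1 p.2 r) :=
      fun i j => Finset.le_sup' (f := fun p => γt p.1 p.2 r) (Finset.mem_univ (i, j))
    constructor
    · rw [le_div_iff₀ hpos, hS, Finset.mul_sum]
      show ∑ i, _ * (∑ j, w.1 i * w.2 j) ≤ (gonW γ γt w).2 r
      simp only [gonW, Finset.mul_sum]
      refine Finset.sum_le_sum fun i _ => Finset.sum_le_sum fun j _ => ?_
      rw [← mul_assoc]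
      exact mul_le_mul_of_nonneg_right
        (mul_le_mul_of_nonneg_right (hm i j) (hwx i)) (hwy j)
    · rw [div_le_iff₀ hpos, hS, Finset.mul_sum]
      show (gonW γ γt w).2 r ≤ ∑ i, _ * (∑ j, w.1 i * w.2 j)
      simp only [gonW, Finset.mul_sum]
      refine Finset.sum_le_sum fun i _ => Finset.sum_le_sum fun j _ => ?_
      rw [← mul_assoc]
      exact mul_le_mul_of_nonneg_right
        (mul_le_mul_of_nonneg_right (hM i j) (hwx i)) (hwy j)
end

section
/- Assume W is stochastic. The map z* ↦ z*/ϖ(z*) is a bijection from the set of nonnegative normalizable fixed points of W, namely {z* ∈ ℝ^{n+ν} : W(z*) = z*, all coordinates of z* ≥ 0, ϖ(z*) > 0}, onto the set of fixed points of the normalized gonosomal operator V in S^{n,ν}, namely {z ∈ S^{n,ν} : ϖ(W(z)) ≠ 0 and V(z) = z}. -/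
/-- The normalized gonosomal operator `V(z) = W(z)/ϖ(W(z))`
(junk value `0` when `ϖ(W(z)) = 0`). -/
noncomputable def gonV {n ν : ℕ} (γ : Fin n → Fin ν → Fin n → ℝ)
    (γt : Fin n → Fin ν → Fin ν → ℝ)
    (z : (Fin n → ℝ) × (Fin ν → ℝ)) : (Fin n → ℝ) × (Fin ν → ℝ) :=
  (gonPi (gonW γ γt z))⁻¹ • gonW γ γt z

/-!
`W` is a homogeneous quadratic map, `W (c • z) = c² • W z`. Hence if `W z* = z*` then
`w = z*/ϖ(z*)` satisfies `W w = ϖ(z*)⁻¹ • w` and `ϖ(w) = 1`, so `V w = w`. Conversely, `V z = z`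
says `W z = p • z` with `p = ϖ(W z)`, and then `p⁻¹ • z` is a fixed point of `W`; here `p > 0`
because `W` preserves the nonnegative cone. Two fixed points of `W` on the same open ray coincide,
since `W (c • z*) = c • (c • z*)`. Finally `W` vanishes on `O^{n,ν}`, so a nonzero eigenvector of
`W` with nonzero eigenvalue lies outside it.
-/

namespace Gonosomal

variable {n ν : ℕ} {γ : Fin n → Fin ν → Fin n → ℝ} {γt : Fin n → Fin ν → Fin ν → ℝ}

def fixedPointsW (γ : Fin n → Fin ν → Fin n → ℝ) (γt : Fin n → Fin ν → Fin ν → ℝ) :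
    Set ((Fin n → ℝ) × (Fin ν → ℝ)) :=
  {z | gonW γ γt z = z ∧ (∀ i, 0 ≤ z.1 i) ∧ (∀ j, 0 ≤ z.2 j) ∧ 0 < gonPi z}

def fixedPointsV (γ : Fin n → Fin ν → Fin n → ℝ) (γt : Fin n → Fin ν → Fin ν → ℝ) :
    Set ((Fin n → ℝ) × (Fin ν → ℝ)) :=
  {z | ((∀ i, 0 ≤ z.1 i) ∧ (∀ j, 0 ≤ z.2 j) ∧ gonPi z = 1 ∧ ¬ (z.1 = 0 ∨ z.2 = 0)) ∧
    gonPi (gonW γ γt z) ≠ 0 ∧ gonV γ γt z = z}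

lemma gonPi_smul (c : ℝ) (z : (Fin n → ℝ) × (Fin ν → ℝ)) : gonPi (c • z) = c * gonPi z := by
  simp [gonPi, Finset.mul_sum, mul_add]

lemma ne_zero_of_gonPi_ne_zero {z : (Fin n → ℝ) × (Fin ν → ℝ)} (h : gonPi z ≠ 0) : z ≠ 0 := by
  rintro rfl
  simp [gonPi] at h

lemma gonW_smul (c : ℝ) (z : (Fin n → ℝ) × (Fin ν → ℝ)) :
    gonW γ γt (c • z) = (c * c) • gonW γ γt z := by
  refine Prod.ext (funext fun k => ?_) (funext fun r => ?_) <;>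
    simp only [gonW, Prod.smul_fst, Prod.smul_snd, Pi.smul_apply, smul_eq_mul, Finset.mul_sum] <;>
    exact Finset.sum_congr rfl fun i _ => Finset.sum_congr rfl fun j _ => by ring

lemma gonW_smul_of_eq_smul {z : (Fin n → ℝ) × (Fin ν → ℝ)} {μ : ℝ} (h : gonW γ γt z = μ • z)
    (c : ℝ) : gonW γ γt (c • z) = (c * μ) • c • z := by
  rw [gonW_smul, h, smul_smul, smul_smul]
  ring_nf

lemma gonW_eq_zero_of_fst_eq_zero_or_snd_eq_zero {z : (Fin n → ℝ) × (Fin ν → ℝ)}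
    (h : z.1 = 0 ∨ z.2 = 0) : gonW γ γt z = 0 := by
  rcases h with h | h <;> simp [gonW, h] <;> exact ⟨rfl, rfl⟩

lemma not_fst_eq_zero_or_snd_eq_zero_of_gonW_eq_smul {z : (Fin n → ℝ) × (Fin ν → ℝ)} {μ : ℝ}
    (h : gonW γ γt z = μ • z) (hμ : μ ≠ 0) (hz : z ≠ 0) : ¬ (z.1 = 0 ∨ z.2 = 0) := fun hO =>
  hz ((smul_eq_zero.1 (h ▸ gonW_eq_zero_of_fst_eq_zero_or_snd_eq_zero hO)).resolve_left hμ)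

lemma gonPi_gonW_nonneg (hγ : ∀ i j k, 0 ≤ γ i j k) (hγt : ∀ i j r, 0 ≤ γt i j r)
    {z : (Fin n → ℝ) × (Fin ν → ℝ)} (hx : ∀ i, 0 ≤ z.1 i) (hy : ∀ j, 0 ≤ z.2 j) :
    0 ≤ gonPi (gonW γ γt z) := by
  unfold gonPi gonW
  dsimp only
  refine add_nonneg ?_ ?_ <;>
    exact Finset.sum_nonneg fun _ _ => Finset.sum_nonneg fun i _ =>
      Finset.sum_nonneg fun j _ => mul_nonneg (mul_nonneg (by simp [*]) (hx i)) (hy j)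

lemma gonW_eq_smul_of_gonV_eq_self {z : (Fin n → ℝ) × (Fin ν → ℝ)}
    (hp : gonPi (gonW γ γt z) ≠ 0) (h : gonV γ γt z = z) :
    gonW γ γt z = gonPi (gonW γ γt z) • z :=
  (inv_smul_eq_iff₀ hp).1 h

lemma gonV_eq_self_of_gonW_eq_smul {z : (Fin n → ℝ) × (Fin ν → ℝ)} {μ : ℝ}
    (h : gonW γ γt z = μ • z) (hμ : μ ≠ 0) (hz : gonPi z = 1) : gonV γ γt z = z := by
  rw [gonV, h, gonPi_smul, hz, mul_one, inv_smul_smul₀ hμ]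

lemma eq_one_of_gonW_smul_eq_smul {w : (Fin n → ℝ) × (Fin ν → ℝ)} {c : ℝ}
    (hw : gonW γ γt w = w) (hw0 : w ≠ 0) (hc : c ≠ 0) (h : gonW γ γt (c • w) = c • w) :
    c = 1 := by
  have hcw : c • w = c • c • w := by
    simpa [h] using gonW_smul_of_eq_smul (hw.trans (one_smul ℝ w).symm) c
  have : (1 : ℝ) • w = c • w := by simpa using smul_right_injective _ hc hcw
  exact (smul_left_injective ℝ hw0 this).symm

lemma mapsTo_fixedPointsW_fixedPointsV :
    Set.MapsTo (fun z => (gonPi z)⁻¹ • z) (fixedPointsW γ γt) (fixedPointsV γ γt) := by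
  rintro z ⟨hfix, hx, hy, hs⟩
  set s := gonPi z
  have hs_inv : 0 < s⁻¹ := inv_pos.2 hs
  have hW : gonW γ γt (s⁻¹ • z) = s⁻¹ • s⁻¹ • z := by
    simpa using gonW_smul_of_eq_smul (hfix.trans (one_smul ℝ z).symm) s⁻¹
  have hnorm : gonPi (s⁻¹ • z) = 1 := by rw [gonPi_smul, inv_mul_cancel₀ hs.ne']
  have hpW : gonPi (gonW γ γt (s⁻¹ • z)) = s⁻¹ := by rw [hW, gonPi_smul, hnorm, mul_one]
  have hne : s⁻¹ • z ≠ 0 := ne_zero_of_gonPi_ne_zero (hnorm ▸ one_ne_zero)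
  exact ⟨⟨fun i => mul_nonneg hs_inv.le (hx i), fun j => mul_nonneg hs_inv.le (hy j), hnorm,
    not_fst_eq_zero_or_snd_eq_zero_of_gonW_eq_smul hW hs_inv.ne' hne⟩,
    hpW ▸ hs_inv.ne', gonV_eq_self_of_gonW_eq_smul hW hs_inv.ne' hnorm⟩

lemma injOn_fixedPointsW : Set.InjOn (fun z => (gonPi z)⁻¹ • z) (fixedPointsW γ γt) := by
  rintro z ⟨hz, -, -, hs⟩ w ⟨hw, -, -, ht⟩ heq
  have hzw : z = (gonPi z * (gonPi w)⁻¹) • w := by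
    rw [mul_smul]
    exact (inv_smul_eq_iff₀ hs.ne').1 heq
  have hc : gonPi z * (gonPi w)⁻¹ = 1 :=
    eq_one_of_gonW_smul_eq_smul hw (ne_zero_of_gonPi_ne_zero ht.ne') (by positivity) (hzw ▸ hz)
  rw [hzw, hc, one_smul]

lemma surjOn_fixedPointsV (hγ : ∀ i j k, 0 ≤ γ i j k) (hγt : ∀ i j r, 0 ≤ γt i j r) :
    Set.SurjOn (fun z => (gonPi z)⁻¹ • z) (fixedPointsW γ γt) (fixedPointsV γ γt) := by
  rintro z ⟨⟨hx, hy, hnorm, -⟩, hp, hV⟩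
  set p := gonPi (gonW γ γt z)
  have hp_inv : 0 < p⁻¹ := inv_pos.2 ((gonPi_gonW_nonneg hγ hγt hx hy).lt_of_ne' hp)
  have hW : gonW γ γt z = p • z := gonW_eq_smul_of_gonV_eq_self hp hV
  refine ⟨p⁻¹ • z, ⟨?_, fun i => mul_nonneg hp_inv.le (hx i), fun j => mul_nonneg hp_inv.le (hy j),
    by rwa [gonPi_smul, hnorm, mul_one]⟩, ?_⟩
  · rw [gonW_smul_of_eq_smul hW, inv_mul_cancel₀ hp, one_smul]
  · simp only [gonPi_smul, hnorm, mul_one, inv_inv, smul_inv_smul₀ hp]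

end Gonosomal

theorem gonosomal_fixedPoints_W_V_bijection_general
    {n ν : ℕ}
    (γ : Fin n → Fin ν → Fin n → ℝ) (γt : Fin n → Fin ν → Fin ν → ℝ)
    (hγ : ∀ i j k, 0 ≤ γ i j k) (hγt : ∀ i j r, 0 ≤ γt i j r) :
    Set.BijOn (fun z : (Fin n → ℝ) × (Fin ν → ℝ) => (gonPi z)⁻¹ • z)
      {z | gonW γ γt z = z ∧ (∀ i, 0 ≤ z.1 i) ∧ (∀ j, 0 ≤ z.2 j) ∧
        0 < gonPi z}
      {z | ((∀ i, 0 ≤ z.1 i) ∧ (∀ j, 0 ≤ z.2 j) ∧ gonPi z = 1 ∧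
        ¬ (z.1 = 0 ∨ z.2 = 0)) ∧ gonPi (gonW γ γt z) ≠ 0 ∧
        gonV γ γt z = z} :=
  ⟨Gonosomal.mapsTo_fixedPointsW_fixedPointsV, Gonosomal.injOn_fixedPointsW,
    Gonosomal.surjOn_fixedPointsV hγ hγt⟩

/-- `z* ↦ z*/ϖ(z*)` is a bijection from the nonnegative normalizable fixed
points of `W` onto the fixed points of `V` in `S^{n,ν}`. -/
theorem gonosomal_fixedPoints_W_V_bijection
    {n ν : ℕ} (hn : 1 ≤ n) (hν : 1 ≤ ν)
    (γ : Fin n → Fin ν → Fin n → ℝ) (γt : Fin n → Fin ν → Fin ν → ℝ)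
    (hγ : ∀ i j k, 0 ≤ γ i j k) (hγt : ∀ i j r, 0 ≤ γt i j r)
    (hsum : ∀ (i : Fin n) (j : Fin ν), (∑ k, γ i j k) + (∑ r, γt i j r) = 1) :
    Set.BijOn (fun z : (Fin n → ℝ) × (Fin ν → ℝ) => (gonPi z)⁻¹ • z)
      {z | gonW γ γt z = z ∧ (∀ i, 0 ≤ z.1 i) ∧ (∀ j, 0 ≤ z.2 j) ∧
        0 < gonPi z}
      {z | ((∀ i, 0 ≤ z.1 i) ∧ (∀ j, 0 ≤ z.2 j) ∧ gonPi z = 1 ∧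
        ¬ (z.1 = 0 ∨ z.2 = 0)) ∧ gonPi (gonW γ γt z) ≠ 0 ∧
        gonV γ γt z = z} :=
  gonosomal_fixedPoints_W_V_bijection_general γ γt hγ hγt
end

section
/- Let 0 < γ < 1 and W : ℝ² → ℝ², W(x,y) = (γxy, (1−γ)xy). For any initial point z⁽⁰⁾ = (x⁽⁰⁾, y⁽⁰⁾) ∈ ℝ²: (i) if |x⁽⁰⁾y⁽⁰⁾| < 1/(γ(1−γ)) then W^t(z⁽⁰⁾) → (0,0) as t → ∞; (ii) if |x⁽⁰⁾y⁽⁰⁾| = 1/(γ(1−γ)) then W^t(z⁽⁰⁾) → (1/(1−γ), 1/γ); (iii) if |x⁽⁰⁾y⁽⁰⁾| > 1/(γ(1−γ)) then both coordinates of W^t(z⁽⁰⁾) tend to +∞. Moreover, if x⁽⁰⁾y⁽⁰⁾ ≠ 0, then for every t ≥ 1 the normalized iterate satisfies W^t(z⁽⁰⁾)/ϖ(W^t(z⁽⁰⁾)) = (γ, 1−γ), where ϖ(x,y) = x + y. -/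
/-- The gonosomal operator of the algebra `ℝ⟨e,ẽ⟩`, `e·ẽ = γe + (1−γ)ẽ`:
`W(x,y) = (γxy, (1−γ)xy)`. -/
noncomputable def gonW2 (γ : ℝ) (p : ℝ × ℝ) : ℝ × ℝ :=
  (γ * p.1 * p.2, (1 - γ) * p.1 * p.2)

/-!
Put `u = γ(1-γ)xy`. Since `W(x,y) = xy • (γ, 1-γ)`, one step of `W` squares `u`, so
`W^{n+1}(z) = u₀^{2^n} • (1/(1-γ), 1/γ)` and the three regimes are those of `u₀^{2^n}` for
`|u₀| < 1`, `|u₀| = 1`, `|u₀| > 1`. As the coordinates of `(γ, 1-γ)` sum to `1`, the normalization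
of `W(x,y)` is `(γ, 1-γ)` whenever `xy ≠ 0`, and `xy ≠ 0` persists along the trajectory.
-/
open Filter Topology

lemma gonW2_eq_smul (γ : ℝ) (p : ℝ × ℝ) : gonW2 γ p = (p.1 * p.2) • (γ, 1 - γ) := by
  ext <;> simp only [gonW2, Prod.smul_mk, smul_eq_mul] <;> ring

lemma fst_mul_snd_gonW2 (γ : ℝ) (p : ℝ × ℝ) :
    (gonW2 γ p).1 * (gonW2 γ p).2 = γ * (1 - γ) * (p.1 * p.2) ^ 2 := by
  simp only [gonW2]; ring

lemma scaled_fst_mul_snd_iterate_gonW2 (γ : ℝ) (z : ℝ × ℝ) (n : ℕ) :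
    γ * (1 - γ) * (((gonW2 γ)^[n] z).1 * ((gonW2 γ)^[n] z).2) =
      (γ * (1 - γ) * (z.1 * z.2)) ^ 2 ^ n := by
  induction n with
  | zero => simp
  | succ n ih =>
    rw [Function.iterate_succ_apply', fst_mul_snd_gonW2, pow_succ 2 n, pow_mul, ← ih]
    ring

lemma iterate_succ_gonW2 {γ : ℝ} (hγ0 : γ ≠ 0) (hγ1 : γ ≠ 1) (z : ℝ × ℝ) (n : ℕ) :
    (gonW2 γ)^[n + 1] z = (γ * (1 - γ) * (z.1 * z.2)) ^ 2 ^ n • (1 / (1 - γ), 1 / γ) := by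
  have hγ1' : 1 - γ ≠ 0 := sub_ne_zero.2 hγ1.symm
  rw [Function.iterate_succ_apply', gonW2_eq_smul, ← scaled_fst_mul_snd_iterate_gonW2]
  ext <;> simp only [Prod.smul_mk, smul_eq_mul] <;> field_simp

lemma pow_two_pow_succ_eq_abs_pow (a : ℝ) (n : ℕ) : a ^ 2 ^ (n + 1) = |a| ^ 2 ^ (n + 1) :=
  ((Nat.even_pow' n.succ_ne_zero).2 even_two).pow_abs a |>.symm

lemma tendsto_pow_two_pow_of_abs_lt_one {a : ℝ} (h : |a| < 1) :
    Tendsto (fun n : ℕ => a ^ 2 ^ n) atTop (𝓝 0) :=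
  (tendsto_pow_atTop_nhds_zero_of_abs_lt_one h).comp
    (tendsto_pow_atTop_atTop_of_one_lt one_lt_two)

lemma tendsto_pow_two_pow_of_abs_eq_one {a : ℝ} (h : |a| = 1) :
    Tendsto (fun n : ℕ => a ^ 2 ^ n) atTop (𝓝 1) := by
  rw [← tendsto_add_atTop_iff_nat 1]
  exact tendsto_const_nhds.congr fun n => by rw [pow_two_pow_succ_eq_abs_pow, h, one_pow]

lemma tendsto_pow_two_pow_of_one_lt_abs {a : ℝ} (h : 1 < |a|) :
    Tendsto (fun n : ℕ => a ^ 2 ^ n) atTop atTop := by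
  rw [← tendsto_add_atTop_iff_nat 1]
  exact ((tendsto_pow_atTop_atTop_of_one_lt h).comp
    ((tendsto_pow_atTop_atTop_of_one_lt one_lt_two).comp (tendsto_add_atTop_nat 1))).congr
      fun n => (pow_two_pow_succ_eq_abs_pow a n).symm

/-- Asymptotic behavior of the trajectories of `W(x,y) = (γxy, (1−γ)xy)`,
`0 < γ < 1`, and stationarity of the normalized trajectories. -/
theorem gonosomal2_trajectories (γ : ℝ) (h0 : 0 < γ) (h1 : γ < 1)
    (z : ℝ × ℝ) :
    (|z.1 * z.2| < 1 / (γ * (1 - γ)) →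
      Filter.Tendsto (fun t => (gonW2 γ)^[t] z) Filter.atTop
        (nhds ((0, 0) : ℝ × ℝ))) ∧
    (|z.1 * z.2| = 1 / (γ * (1 - γ)) →
      Filter.Tendsto (fun t => (gonW2 γ)^[t] z) Filter.atTop
        (nhds ((1 / (1 - γ), 1 / γ) : ℝ × ℝ))) ∧
    (1 / (γ * (1 - γ)) < |z.1 * z.2| →
      Filter.Tendsto (fun t => ((gonW2 γ)^[t] z).1) Filter.atTop Filter.atTop ∧
      Filter.Tendsto (fun t => ((gonW2 γ)^[t] z).2) Filter.atTop Filter.atTop) ∧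
    (z.1 * z.2 ≠ 0 → ∀ t : ℕ, 1 ≤ t →
      (((gonW2 γ)^[t] z).1 + ((gonW2 γ)^[t] z).2)⁻¹ • (gonW2 γ)^[t] z =
        ((γ, 1 - γ) : ℝ × ℝ)) := by
  have hc : 0 < γ * (1 - γ) := mul_pos h0 (sub_pos.2 h1)
  have habs : |γ * (1 - γ) * (z.1 * z.2)| = |z.1 * z.2| * (γ * (1 - γ)) := by
    rw [abs_mul, abs_of_pos hc, mul_comm]
  have hiter := iterate_succ_gonW2 h0.ne' h1.ne z
  refine ⟨fun h => ?_, fun h => ?_, fun h => ?_, fun hz t ht => ?_⟩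
  · rw [← tendsto_add_atTop_iff_nat 1, funext hiter, Prod.mk_zero_zero,
      ← zero_smul ℝ ((1 / (1 - γ), 1 / γ))]
    exact (tendsto_pow_two_pow_of_abs_lt_one (by rwa [habs, ← lt_div_iff₀ hc])).smul_const _
  · rw [← tendsto_add_atTop_iff_nat 1, funext hiter]
    simpa using (tendsto_pow_two_pow_of_abs_eq_one
      (by rw [habs, h, one_div_mul_cancel hc.ne'])).smul_const ((1 / (1 - γ), 1 / γ))
  · have hpow := tendsto_pow_two_pow_of_one_lt_abs (by rwa [habs, ← div_lt_iff₀ hc])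
    simp only [← tendsto_add_atTop_iff_nat 1 (f := fun t => ((gonW2 γ)^[t] z).1),
      ← tendsto_add_atTop_iff_nat 1 (f := fun t => ((gonW2 γ)^[t] z).2), hiter,
      Prod.smul_fst, Prod.smul_snd, smul_eq_mul]
    exact ⟨hpow.atTop_mul_const (by simpa using h1), hpow.atTop_mul_const (by simpa using h0)⟩
  · obtain ⟨n, rfl⟩ := Nat.exists_eq_add_of_le' ht
    have hp : ((gonW2 γ)^[n] z).1 * ((gonW2 γ)^[n] z).2 ≠ 0 := by
      refine right_ne_zero_of_mul (a := γ * (1 - γ)) ?_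
      rw [scaled_fst_mul_snd_iterate_gonW2]
      exact pow_ne_zero _ (mul_ne_zero hc.ne' hz)
    rw [Function.iterate_succ_apply', gonW2_eq_smul, smul_smul]
    simp only [Prod.smul_fst, Prod.smul_snd, smul_eq_mul, ← mul_add, add_sub_cancel, mul_one]
    rw [inv_mul_cancel₀ hp, one_smul]
end

section
/- Let W : ℝ³ → ℝ³ be the operator W(x₁, x₂, y) = ((γ₁x₁ + δ₁x₂)y, (γ₂x₁ + δ₂x₂)y, (γx₁ + δx₂)y) with real coefficients γ₁, γ₂, δ₁, δ₂ and γ = 1 − γ₁ − γ₂, δ = 1 − δ₁ − δ₂. If (x₁, x₂, y) is a fixed point of W with y ≠ 0, then y satisfies the quadratic equation (γ₁δ₂ − γ₂δ₁)y² − (γ₁ + δ₂)y + 1 = 0. -/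
/-- For the type (2,1) gonosomal operator
`W(x₁,x₂,y) = ((γ₁x₁+δ₁x₂)y, (γ₂x₁+δ₂x₂)y, (γx₁+δx₂)y)` with
`γ = 1−γ₁−γ₂`, `δ = 1−δ₁−δ₂`, any fixed point with `y ≠ 0` satisfies
`(γ₁δ₂ − γ₂δ₁)y² − (γ₁+δ₂)y + 1 = 0`. -/
theorem gonosomal21_fixedPoint_quadratic (γ₁ γ₂ δ₁ δ₂ : ℝ)
    (p : ℝ × ℝ × ℝ)
    (hfix : (((γ₁ * p.1 + δ₁ * p.2.1) * p.2.2,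
              (γ₂ * p.1 + δ₂ * p.2.1) * p.2.2,
              ((1 - γ₁ - γ₂) * p.1 + (1 - δ₁ - δ₂) * p.2.1) * p.2.2) :
        ℝ × ℝ × ℝ) = p)
    (hy : p.2.2 ≠ 0) :
    (γ₁ * δ₂ - γ₂ * δ₁) * p.2.2 ^ 2 - (γ₁ + δ₂) * p.2.2 + 1 = 0 := by
  obtain ⟨x₁, x₂, y⟩ := p
  simp only [Prod.mk.injEq] at hfix
  obtain ⟨e1, e2, e3⟩ := hfix
  simp only at hy ⊢
  have h3 : (1 - γ₁ - γ₂) * x₁ + (1 - δ₁ - δ₂) * x₂ = 1 :=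
    mul_right_cancel₀ hy (by rw [e3, one_mul])
  linear_combination
    ((1 - γ₁ - γ₂) * (δ₂ * y - 1) + (1 - δ₁ - δ₂) * (-(γ₂ * y))) * e1 +
    ((1 - γ₁ - γ₂) * (-(δ₁ * y)) + (1 - δ₁ - δ₂) * (γ₁ * y - 1)) * e2 -
    ((γ₁ * δ₂ - γ₂ * δ₁) * y ^ 2 - (γ₁ + δ₂) * y + 1) * h3
end

section
/- Let 0 ≤ μ, η ≤ 1 and let W_{μ,η} : ℝ⁴ → ℝ⁴ be the hemophilia operator defined below. For every z = (x₁, x₂, y₁, y₂) ∈ S^{2,2} (i.e. x₁, x₂, y₁, y₂ ≥ 0, x₁ + x₂ + y₁ + y₂ = 1, x₁ + x₂ > 0 and y₁ + y₂ > 0), writing z⁽ⁿ⁾ = W_{μ,η}ⁿ(z) = (x₁⁽ⁿ⁾, x₂⁽ⁿ⁾, y₁⁽ⁿ⁾, y₂⁽ⁿ⁾) and F(z) = (x₁ + x₂)(y₁ + y₂), one has F(z⁽ⁿ⁾) ≤ (1/4)^{2ⁿ} for all n ≥ 1, every coordinate of z⁽ⁿ⁺¹⁾ is between 0 and F(z⁽ⁿ⁾),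 and consequently z⁽ⁿ⁾ → (0,0,0,0) as n → ∞. -/
/-!
Every coordinate of `W_{μ,η}` is a combination `∑ cᵢⱼ xᵢ yⱼ` with nonnegative coefficients, and
after grouping, the two `x`-coordinates and the two `y`-coordinates both carry coefficients at
most `1`. Hence on the nonnegative orthant both partial sums of `W z` are at most `F(z)`, so
`F(W z) ≤ F(z)²`. Since `F(z) ≤ ((x₁ + x₂ + y₁ + y₂) / 2)² = 1/4` on the simplex, this gives
`F(z⁽ⁿ⁾) ≤ (1/4)^{2ⁿ}`, which bounds every coordinate of `z⁽ⁿ⁺¹⁾` and forces convergence to `0`.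
-/

/-- The hemophilia gonosomal operator `W_{μ,η}` on `ℝ⁴`, acting on
`(x₁, x₂, y₁, y₂)`. -/
noncomputable def gonWhem (μ η : ℝ) (z : ℝ × ℝ × ℝ × ℝ) : ℝ × ℝ × ℝ × ℝ :=
  ((1 - μ) * (1 - η) / (2 - μ * η) * z.1 * z.2.2.1
     + (1 - μ) * (1 - η) / (4 - (1 + μ) * η) * z.2.1 * z.2.2.1,
   (μ + η - 2 * μ * η) / (2 - μ * η) * z.1 * z.2.2.1
     + (1 - μ) / (2 - μ) * z.1 * z.2.2.2
     + (1 + μ - 2 * μ * η) / (4 - (1 + μ) * η) * z.2.1 * z.2.2.1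
     + (1 - μ) / (3 - μ) * z.2.1 * z.2.2.2,
   (1 - μ) / (2 - μ * η) * z.1 * z.2.2.1
     + (1 - μ) / (2 - μ) * z.1 * z.2.2.2
     + (1 - μ) / (4 - (1 + μ) * η) * z.2.1 * z.2.2.1
     + (1 - μ) / (3 - μ) * z.2.1 * z.2.2.2,
   μ / (2 - μ * η) * z.1 * z.2.2.1
     + μ / (2 - μ) * z.1 * z.2.2.2
     + (1 + μ) / (4 - (1 + μ) * η) * z.2.1 * z.2.2.1
     + (1 + μ) / (3 - μ) * z.2.1 * z.2.2.2)

/-- The Lyapunov function `F(z) = (x₁ + x₂)(y₁ + y₂)`. -/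
noncomputable def gonFhem (z : ℝ × ℝ × ℝ × ℝ) : ℝ :=
  (z.1 + z.2.1) * (z.2.2.1 + z.2.2.2)

open Filter Topology

lemma le_pow_two_pow_of_le_sq {R : Type*} [Semiring R] [PartialOrder R] [IsOrderedRing R]
    {a : ℕ → R} {c : R} (ha : ∀ n, 0 ≤ a n) (h0 : a 0 ≤ c)
    (hsq : ∀ n, a (n + 1) ≤ a n ^ 2) (n : ℕ) : a n ≤ c ^ 2 ^ n := by
  induction n with
  | zero => simpa using h0
  | succ n ih =>
    calc a (n + 1) ≤ a n ^ 2 := hsq n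
      _ ≤ (c ^ 2 ^ n) ^ 2 := pow_le_pow_left₀ (ha n) ih 2
      _ = c ^ 2 ^ (n + 1) := by rw [← pow_mul, pow_succ]

lemma tendsto_pow_two_pow_atTop_nhds_zero {c : ℝ} (hc₀ : 0 ≤ c) (hc₁ : c < 1) :
    Tendsto (fun n : ℕ => c ^ 2 ^ n) atTop (𝓝 0) :=
  (tendsto_pow_atTop_nhds_zero_of_lt_one hc₀ hc₁).comp
    (tendsto_pow_atTop_atTop_of_one_lt one_lt_two)

def crossForm (a b c d : ℝ) (z : ℝ × ℝ × ℝ × ℝ) : ℝ :=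
  a * z.1 * z.2.2.1 + b * z.1 * z.2.2.2 + c * z.2.1 * z.2.2.1 + d * z.2.1 * z.2.2.2

section crossForm

variable {a b c d a' b' c' d' : ℝ} {z : ℝ × ℝ × ℝ × ℝ}

lemma crossForm_add :
    crossForm a b c d z + crossForm a' b' c' d' z
      = crossForm (a + a') (b + b') (c + c') (d + d') z := by
  simp only [crossForm]; ring

lemma crossForm_nonneg (ha : 0 ≤ a) (hb : 0 ≤ b) (hc : 0 ≤ c) (hd : 0 ≤ d) (hz : 0 ≤ z) :
    0 ≤ crossForm a b c d z := by
  obtain ⟨hx₁, hx₂, hy₁, hy₂⟩ := hz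
  have term {k x y : ℝ} (hk : 0 ≤ k) (hx : 0 ≤ x) (hy : 0 ≤ y) : 0 ≤ k * x * y :=
    mul_nonneg (mul_nonneg hk hx) hy
  exact add_nonneg (add_nonneg (add_nonneg (term ha hx₁ hy₁) (term hb hx₁ hy₂))
    (term hc hx₂ hy₁)) (term hd hx₂ hy₂)

lemma crossForm_le_gonFhem (ha : a ≤ 1) (hb : b ≤ 1) (hc : c ≤ 1) (hd : d ≤ 1) (hz : 0 ≤ z) :
    crossForm a b c d z ≤ gonFhem z := by
  have := crossForm_nonneg (sub_nonneg.2 ha) (sub_nonneg.2 hb) (sub_nonneg.2 hc)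
    (sub_nonneg.2 hd) hz
  simp only [crossForm, gonFhem] at this ⊢
  linarith

end crossForm

lemma gonFhem_nonneg {z : ℝ × ℝ × ℝ × ℝ} (hz : 0 ≤ z) : 0 ≤ gonFhem z := by
  obtain ⟨hx₁, hx₂, hy₁, hy₂⟩ := hz
  exact mul_nonneg (add_nonneg hx₁ hx₂) (add_nonneg hy₁ hy₂)

lemma gonFhem_le_quarter {z : ℝ × ℝ × ℝ × ℝ} (hsum : z.1 + z.2.1 + z.2.2.1 + z.2.2.2 = 1) :
    gonFhem z ≤ 1 / 4 := by
  simp only [gonFhem]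
  nlinarith [sq_nonneg (z.1 + z.2.1 - (z.2.2.1 + z.2.2.2))]

lemma gonWhem_eq (μ η : ℝ) (z : ℝ × ℝ × ℝ × ℝ) :
    gonWhem μ η z =
      (crossForm ((1 - μ) * (1 - η) / (2 - μ * η)) 0 ((1 - μ) * (1 - η) / (4 - (1 + μ) * η)) 0 z,
       crossForm ((μ + η - 2 * μ * η) / (2 - μ * η)) ((1 - μ) / (2 - μ))
         ((1 + μ - 2 * μ * η) / (4 - (1 + μ) * η)) ((1 - μ) / (3 - μ)) z,
       crossForm ((1 - μ) / (2 - μ * η)) ((1 - μ) / (2 - μ))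
         ((1 - μ) / (4 - (1 + μ) * η)) ((1 - μ) / (3 - μ)) z,
       crossForm (μ / (2 - μ * η)) (μ / (2 - μ))
         ((1 + μ) / (4 - (1 + μ) * η)) ((1 + μ) / (3 - μ)) z) := by
  simp only [gonWhem, crossForm, zero_mul, add_zero]

lemma gonWhem_nonneg {μ η : ℝ} (hμ₀ : 0 ≤ μ) (hμ₁ : μ ≤ 1) (hη₀ : 0 ≤ η) (hη₁ : η ≤ 1)
    {z : ℝ × ℝ × ℝ × ℝ} (hz : 0 ≤ z) : 0 ≤ gonWhem μ η z := by
  rw [gonWhem_eq]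
  refine ⟨crossForm_nonneg ?_ ?_ ?_ ?_ hz, crossForm_nonneg ?_ ?_ ?_ ?_ hz,
    crossForm_nonneg ?_ ?_ ?_ ?_ hz, crossForm_nonneg ?_ ?_ ?_ ?_ hz⟩
  all_goals first
    | exact le_rfl
    | exact div_nonneg (by nlinarith) (by nlinarith)

lemma gonWhem_x_add_le {μ η : ℝ} (hμ₀ : 0 ≤ μ) (hμ₁ : μ ≤ 1) (hη₁ : η ≤ 1)
    {z : ℝ × ℝ × ℝ × ℝ} (hz : 0 ≤ z) :
    (gonWhem μ η z).1 + (gonWhem μ η z).2.1 ≤ gonFhem z := by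
  rw [gonWhem_eq, crossForm_add]
  refine crossForm_le_gonFhem ?_ ?_ ?_ ?_ hz
  all_goals
    simp only [zero_add, ← add_div]
    rw [div_le_one₀ (by nlinarith)]
    nlinarith

lemma gonWhem_y_add_le {μ η : ℝ} (hμ₀ : 0 ≤ μ) (hμ₁ : μ ≤ 1) (hη₁ : η ≤ 1)
    {z : ℝ × ℝ × ℝ × ℝ} (hz : 0 ≤ z) :
    (gonWhem μ η z).2.2.1 + (gonWhem μ η z).2.2.2 ≤ gonFhem z := by
  rw [gonWhem_eq, crossForm_add]
  refine crossForm_le_gonFhem ?_ ?_ ?_ ?_ hz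
  all_goals
    rw [← add_div, div_le_one₀ (by nlinarith)]
    nlinarith

lemma gonFhem_gonWhem_le_sq {μ η : ℝ} (hμ₀ : 0 ≤ μ) (hμ₁ : μ ≤ 1) (hη₀ : 0 ≤ η) (hη₁ : η ≤ 1)
    {z : ℝ × ℝ × ℝ × ℝ} (hz : 0 ≤ z) : gonFhem (gonWhem μ η z) ≤ gonFhem z ^ 2 := by
  obtain ⟨-, -, hy₁, hy₂⟩ := gonWhem_nonneg hμ₀ hμ₁ hη₀ hη₁ hz
  rw [sq]
  exact mul_le_mul (gonWhem_x_add_le hμ₀ hμ₁ hη₁ hz) (gonWhem_y_add_le hμ₀ hμ₁ hη₁ hz)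
    (add_nonneg hy₁ hy₂) (gonFhem_nonneg hz)

lemma gonWhem_coords_mem_Icc {μ η : ℝ} (hμ₀ : 0 ≤ μ) (hμ₁ : μ ≤ 1) (hη₀ : 0 ≤ η)
    (hη₁ : η ≤ 1) {z : ℝ × ℝ × ℝ × ℝ} (hz : 0 ≤ z) :
    (gonWhem μ η z).1 ∈ Set.Icc 0 (gonFhem z) ∧ (gonWhem μ η z).2.1 ∈ Set.Icc 0 (gonFhem z) ∧
      (gonWhem μ η z).2.2.1 ∈ Set.Icc 0 (gonFhem z) ∧
      (gonWhem μ η z).2.2.2 ∈ Set.Icc 0 (gonFhem z) := by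
  have hW := gonWhem_nonneg hμ₀ hμ₁ hη₀ hη₁ hz
  simp only [Prod.le_def, Prod.fst_zero, Prod.snd_zero] at hW
  obtain ⟨hx₁, hx₂, hy₁, hy₂⟩ := hW
  have hx := gonWhem_x_add_le hμ₀ hμ₁ hη₁ hz
  have hy := gonWhem_y_add_le hμ₀ hμ₁ hη₁ hz
  exact ⟨⟨hx₁, by linarith⟩, ⟨hx₂, by linarith⟩, ⟨hy₁, by linarith⟩, ⟨hy₂, by linarith⟩⟩

lemma norm_le_of_coords_mem_Icc {w : ℝ × ℝ × ℝ × ℝ} {r : ℝ}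
    (h : w.1 ∈ Set.Icc 0 r ∧ w.2.1 ∈ Set.Icc 0 r ∧ w.2.2.1 ∈ Set.Icc 0 r ∧
      w.2.2.2 ∈ Set.Icc 0 r) : ‖w‖ ≤ r := by
  obtain ⟨⟨h₁, h₁'⟩, ⟨h₂, h₂'⟩, ⟨h₃, h₃'⟩, ⟨h₄, h₄'⟩⟩ := h
  simp only [Prod.norm_def, Real.norm_of_nonneg h₁, Real.norm_of_nonneg h₂,
    Real.norm_of_nonneg h₃, Real.norm_of_nonneg h₄]
  exact max_le h₁' (max_le h₂' (max_le h₃' h₄'))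

theorem gonosomal_hemophilia_trajectory_general (μ η : ℝ)
    (hμ0 : 0 ≤ μ) (hμ1 : μ ≤ 1) (hη0 : 0 ≤ η) (hη1 : η ≤ 1)
    (z : ℝ × ℝ × ℝ × ℝ)
    (hx1 : 0 ≤ z.1) (hx2 : 0 ≤ z.2.1) (hy1 : 0 ≤ z.2.2.1) (hy2 : 0 ≤ z.2.2.2)
    (hsum : z.1 + z.2.1 + z.2.2.1 + z.2.2.2 = 1) :
    (∀ n : ℕ, 1 ≤ n →
      gonFhem ((gonWhem μ η)^[n] z) ≤ (1 / 4 : ℝ) ^ 2 ^ n) ∧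
    (∀ n : ℕ,
      (0 ≤ ((gonWhem μ η)^[n + 1] z).1 ∧
        ((gonWhem μ η)^[n + 1] z).1 ≤ gonFhem ((gonWhem μ η)^[n] z)) ∧
      (0 ≤ ((gonWhem μ η)^[n + 1] z).2.1 ∧
        ((gonWhem μ η)^[n + 1] z).2.1 ≤ gonFhem ((gonWhem μ η)^[n] z)) ∧
      (0 ≤ ((gonWhem μ η)^[n + 1] z).2.2.1 ∧
        ((gonWhem μ η)^[n + 1] z).2.2.1 ≤ gonFhem ((gonWhem μ η)^[n] z)) ∧
      (0 ≤ ((gonWhem μ η)^[n + 1] z).2.2.2 ∧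
        ((gonWhem μ η)^[n + 1] z).2.2.2 ≤ gonFhem ((gonWhem μ η)^[n] z))) ∧
    Filter.Tendsto (fun n => (gonWhem μ η)^[n] z) Filter.atTop
      (nhds ((0, 0, 0, 0) : ℝ × ℝ × ℝ × ℝ)) := by
  have hnonneg (n : ℕ) : 0 ≤ (gonWhem μ η)^[n] z :=
    Set.MapsTo.iterate (f := gonWhem μ η) (s := Set.Ici 0)
      (fun _ => gonWhem_nonneg hμ0 hμ1 hη0 hη1) n ⟨hx1, hx2, hy1, hy2⟩
  have hF (n : ℕ) : gonFhem ((gonWhem μ η)^[n] z) ≤ (1 / 4 : ℝ) ^ 2 ^ n :=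
    le_pow_two_pow_of_le_sq (fun n => gonFhem_nonneg (hnonneg n)) (gonFhem_le_quarter hsum)
      (fun n => by
        rw [Function.iterate_succ_apply']
        exact gonFhem_gonWhem_le_sq hμ0 hμ1 hη0 hη1 (hnonneg n)) n
  have hstep (n : ℕ) := Function.iterate_succ_apply' (gonWhem μ η) n z ▸
    gonWhem_coords_mem_Icc hμ0 hμ1 hη0 hη1 (hnonneg n)
  refine ⟨fun n _ => hF n, hstep, ?_⟩
  rw [← tendsto_add_atTop_iff_nat 1]
  exact squeeze_zero_norm (fun n => (norm_le_of_coords_mem_Icc (hstep n)).trans (hF n))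
    (tendsto_pow_two_pow_atTop_nhds_zero (by norm_num) (by norm_num))

/-- For any `z ∈ S^{2,2}` and `0 ≤ μ, η ≤ 1`, the trajectory of the
hemophilia operator satisfies `F(z⁽ⁿ⁾) ≤ (1/4)^{2ⁿ}` for `n ≥ 1`, every
coordinate of `z⁽ⁿ⁺¹⁾` lies between `0` and `F(z⁽ⁿ⁾)`, and the trajectory
tends to the fixed point `0` (exponentially fast). -/
theorem gonosomal_hemophilia_trajectory (μ η : ℝ)
    (hμ0 : 0 ≤ μ) (hμ1 : μ ≤ 1) (hη0 : 0 ≤ η) (hη1 : η ≤ 1)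
    (z : ℝ × ℝ × ℝ × ℝ)
    (hx1 : 0 ≤ z.1) (hx2 : 0 ≤ z.2.1) (hy1 : 0 ≤ z.2.2.1) (hy2 : 0 ≤ z.2.2.2)
    (hsum : z.1 + z.2.1 + z.2.2.1 + z.2.2.2 = 1)
    (hx : 0 < z.1 + z.2.1) (hy : 0 < z.2.2.1 + z.2.2.2) :
    (∀ n : ℕ, 1 ≤ n →
      gonFhem ((gonWhem μ η)^[n] z) ≤ (1 / 4 : ℝ) ^ 2 ^ n) ∧
    (∀ n : ℕ,
      (0 ≤ ((gonWhem μ η)^[n + 1] z).1 ∧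
        ((gonWhem μ η)^[n + 1] z).1 ≤ gonFhem ((gonWhem μ η)^[n] z)) ∧
      (0 ≤ ((gonWhem μ η)^[n + 1] z).2.1 ∧
        ((gonWhem μ η)^[n + 1] z).2.1 ≤ gonFhem ((gonWhem μ η)^[n] z)) ∧
      (0 ≤ ((gonWhem μ η)^[n + 1] z).2.2.1 ∧
        ((gonWhem μ η)^[n + 1] z).2.2.1 ≤ gonFhem ((gonWhem μ η)^[n] z)) ∧
      (0 ≤ ((gonWhem μ η)^[n + 1] z).2.2.2 ∧
        ((gonWhem μ η)^[n + 1] z).2.2.2 ≤ gonFhem ((gonWhem μ η)^[n] z))) ∧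
    Filter.Tendsto (fun n => (gonWhem μ η)^[n] z) Filter.atTop
      (nhds ((0, 0, 0, 0) : ℝ × ℝ × ℝ × ℝ)) :=
  gonosomal_hemophilia_trajectory_general μ η hμ0 hμ1 hη0 hη1 z hx1 hx2 hy1 hy2 hsum
end
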